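/- In a unital coFrobenius bialgebra (A, μ, λ, η) with copairing c, the triple operation β = (1⊗μ⊗1)(c⊗c) : R → A⊗A⊗A is cyclically symmetric: σβ = β, where σ is the Koszul-signed cyclic permutation of three tensor factors. -/

import Mathlib

open TensorProduct LinearMap
open scoped TensorProduct DirectSum

namespace GradedCoFrob

variable {R : Type} [CommRing R] {M : Type} [AddCommGroup M] [Module R M]

/-- The Koszul sign `(-1)^n` for `n : ℤ`. -/
def ksign (n : ℤ) : ℤ := (((-1 : ℤˣ) ^ n : ℤˣ) : ℤ)

variable (𝒜 : ℤ → Submodule R M) [DirectSum.Decomposition 𝒜]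

/-- Build a linear map `M →ₗ N` out of its values on the homogeneous pieces,
bundled linearly in the family of values. -/
noncomputable def fromPiecesHom {N : Type} [AddCommGroup N] [Module R N] :
    (∀ i : ℤ, 𝒜 i →ₗ[R] N) →ₗ[R] (M →ₗ[R] N) :=
  (LinearMap.lcomp R N (DirectSum.decomposeLinearEquiv 𝒜).toLinearMap).comp
    (DFinsupp.lsum R (M := fun i => 𝒜 i) (N := N)).toLinearMap

/-- Build a linear map `M →ₗ N` out of its values on the homogeneous pieces. -/
noncomputable def fromPieces {N : Type} [AddCommGroup N] [Module R N]
    (f : ∀ i : ℤ, 𝒜 i →ₗ[R] N) : M →ₗ[R] N :=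
  fromPiecesHom 𝒜 f

/-- Build a bilinear map `M →ₗ M →ₗ N` out of its values on pairs of homogeneous pieces. -/
noncomputable def fromPieces₂ {N : Type} [AddCommGroup N] [Module R N]
    (f : ∀ i j : ℤ, 𝒜 i →ₗ[R] 𝒜 j →ₗ[R] N) : M →ₗ[R] M →ₗ[R] N :=
  fromPieces 𝒜 (fun i => (fromPiecesHom 𝒜).comp (LinearMap.pi (fun j => f i j)))

/-- The operator multiplying the degree `i` component by the Koszul sign `(-1)^(d*i)`. -/
noncomputable def signAction (d : ℤ) : M →ₗ[R] M :=
  fromPieces 𝒜 (fun i => ksign (d * i) • (𝒜 i).subtype)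

/-- The Koszul twist `τ(a ⊗ b) = (-1)^{|a||b|} b ⊗ a`. -/
noncomputable def twist : M ⊗[R] M →ₗ[R] M ⊗[R] M :=
  TensorProduct.lift (fromPieces₂ 𝒜 (fun i j =>
    ksign (i * j) • ((((TensorProduct.mk R M M).flip).comp (𝒜 i).subtype).compl₂
      (𝒜 j).subtype)))

/-- Left contraction `(f ⊗ 1)(x ⊗ y) = f(x) • y` (no Koszul sign since `1` has degree `0`). -/
noncomputable def contrL {N : Type} [AddCommGroup N] [Module R N]
    (f : N →ₗ[R] R) : N ⊗[R] M →ₗ[R] M :=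
  TensorProduct.lift ((LinearMap.lsmul R M).comp f)

/-- Right contraction with Koszul sign:
`(1 ⊗ f)(x ⊗ y) = (-1)^{d|x|} f(y) • x` where `d` is the degree of `f`. -/
noncomputable def contrR {N : Type} [AddCommGroup N] [Module R N]
    (f : N →ₗ[R] R) (d : ℤ) : M ⊗[R] N →ₗ[R] M :=
  TensorProduct.lift ((((LinearMap.lsmul R M).comp f).flip).comp (signAction 𝒜 d))

/-- Koszul-signed evaluation of a pair of functionals on a tensor:
`(x ⊗ y) ↦ f((-1)^{d₁|x|} x) * g((-1)^{d₂|y|} y)`. -/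
noncomputable def ev2 (f g : M →ₗ[R] R) (d₁ d₂ : ℤ) : M ⊗[R] M →ₗ[R] R :=
  TensorProduct.lift (((LinearMap.mul R R).comp (f.comp (signAction 𝒜 d₁))).compl₂
    (g.comp (signAction 𝒜 d₂)))

/-- The map `c⃗ : A^∨ → A`, `f ↦ (-1)^{|f||c|}(f ⊗ 1)c`, implemented by putting the sign
`(-1)^{dc |x|}` on the first tensor factor of the copairing `c` (of degree `dc`). -/
noncomputable def cvec (c : M ⊗[R] M) (dc : ℤ) : (M →ₗ[R] R) →ₗ[R] M :=
  (LinearMap.applyₗ ((LinearMap.rTensor M (signAction 𝒜 dc)) c)).comp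
    ((TensorProduct.lift.equiv (RingHom.id R) M M M).toLinearMap.comp
      (LinearMap.llcomp R M R (M →ₗ[R] M) (LinearMap.lsmul R M)))

/-- The operation `(1 ⊗ c ⊗ 1) : A ⊗ A → (A ⊗ A) ⊗ (A ⊗ A)`,
`a ⊗ b ↦ (-1)^{|c||a|} (a ⊗ c₁) ⊗ (c₂ ⊗ b)` for a copairing `c` of degree `dc`. -/
noncomputable def midIns (c : M ⊗[R] M) (dc : ℤ) :
    M ⊗[R] M →ₗ[R] (M ⊗[R] M) ⊗[R] (M ⊗[R] M) :=
  (TensorProduct.assoc R (M ⊗[R] M) M M).toLinearMap.comp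
    (LinearMap.rTensor M
      (((TensorProduct.assoc R M M M).symm.toLinearMap).comp
        (((TensorProduct.mk R M (M ⊗[R] M)).flip c).comp (signAction 𝒜 dc))))

/-- The Koszul-signed cyclic permutation `σ(a⊗b⊗c) = (-1)^{(|a|+|b|)|c|} c⊗a⊗b`. -/
noncomputable def cyc : (M ⊗[R] M) ⊗[R] M →ₗ[R] (M ⊗[R] M) ⊗[R] M :=
  (LinearMap.rTensor M (twist 𝒜)).comp
    ((TensorProduct.assoc R M M M).symm.toLinearMap.comp
      ((LinearMap.lTensor M (twist 𝒜)).comp (TensorProduct.assoc R M M M).toLinearMap))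

/-- The submodule `A_i ⊗ A_j ⊆ A ⊗ A`. -/
noncomputable def tpiece (i j : ℤ) : Submodule R (M ⊗[R] M) :=
  LinearMap.range (TensorProduct.map (𝒜 i).subtype (𝒜 j).subtype)

/-- The degree `k` part `⨁_{i+j=k} A_i ⊗ A_j` of `A ⊗ A`. -/
noncomputable def tgrade (k : ℤ) : Submodule R (M ⊗[R] M) :=
  ⨆ i : ℤ, tpiece 𝒜 i (k - i)

/-- A product is homogeneous of degree `d`. -/
def IsHomogProd (d : ℤ) (mu : M ⊗[R] M →ₗ[R] M) : Prop :=
  ∀ i j : ℤ, ∀ x ∈ 𝒜 i, ∀ y ∈ 𝒜 j, mu (x ⊗ₜ[R] y) ∈ 𝒜 (i + j + d)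

/-- A coproduct is homogeneous of degree `d`. -/
def IsHomogCoprod (d : ℤ) (lam : M →ₗ[R] M ⊗[R] M) : Prop :=
  ∀ k : ℤ, ∀ x ∈ 𝒜 k, lam x ∈ tgrade 𝒜 (k + d)

/-- A scalar-valued functional is homogeneous of degree `d`. -/
def IsHomogFun (d : ℤ) (f : M →ₗ[R] R) : Prop :=
  ∀ i : ℤ, i ≠ -d → ∀ x ∈ 𝒜 i, f x = 0

/-- A pairing is homogeneous of degree `d`. -/
def IsHomogPairing (d : ℤ) (p : M ⊗[R] M →ₗ[R] R) : Prop :=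
  ∀ i j : ℤ, i + j ≠ -d → ∀ x ∈ 𝒜 i, ∀ y ∈ 𝒜 j, p (x ⊗ₜ[R] y) = 0

end GradedCoFrob
namespace GradedCoFrob

/-- A unital coFrobenius bialgebra structure on a ℤ-graded module
(Definition `defi:coFrobenius-unital-bialgebra`), with all Koszul sign conventions explicit. -/
structure UnitalCoFrob (R : Type) [CommRing R] {M : Type} [AddCommGroup M] [Module R M]
    (𝒜 : ℤ → Submodule R M) [DirectSum.Decomposition 𝒜] where
  mu : M ⊗[R] M →ₗ[R] M
  lam : M →ₗ[R] M ⊗[R] M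
  unit : M
  dm : ℤ
  dl : ℤ
  mu_homog : IsHomogProd 𝒜 dm mu
  lam_homog : IsHomogCoprod 𝒜 dl lam
  unit_homog : unit ∈ 𝒜 (-dm)
  /-- graded associativity `μ(μ⊗1) = (-1)^{|μ|} μ(1⊗μ)` -/
  mu_assoc : mu.comp (LinearMap.rTensor M mu) =
    ksign dm • (mu.comp ((TensorProduct.map (signAction 𝒜 dm) mu).comp
      (TensorProduct.assoc R M M M).toLinearMap))
  /-- `(-1)^{|μ|} μ(η ⊗ 1) = 1` -/
  unit_left : ksign dm • (mu.comp ((TensorProduct.mk R M M) unit)) = LinearMap.id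
  /-- `μ(1 ⊗ η) = 1` -/
  unit_right : mu.comp (((TensorProduct.mk R M M).flip unit).comp (signAction 𝒜 (-dm))) =
    LinearMap.id
  cop : M ⊗[R] M
  /-- the copairing `c = (-1)^{|λ||μ|+|μ|} λη` -/
  cop_def : cop = ksign (dl * dm + dm) • lam unit
  /-- `λ = (1⊗μ)(c⊗1)` -/
  cofrob_left : lam = (TensorProduct.map (signAction 𝒜 dm) mu).comp
    ((TensorProduct.assoc R M M M).toLinearMap.comp (TensorProduct.mk R (M ⊗[R] M) M cop))
  /-- `λ = (-1)^{|μ|}(μ⊗1)(1⊗c)` -/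
  cofrob_right : lam = ksign dm • ((LinearMap.rTensor M mu).comp
    ((TensorProduct.assoc R M M M).symm.toLinearMap.comp
      (((TensorProduct.mk R M (M ⊗[R] M)).flip cop).comp (signAction 𝒜 (dl - dm)))))
  /-- `τc = (-1)^{|λ|} c` -/
  cop_symm : twist 𝒜 cop = ksign dl • cop

/-- A biunital coFrobenius bialgebra structure on a ℤ-graded module
(Definition `defi:biunital-coFrobenius-bialgebra`), with all Koszul sign conventions explicit. -/
structure BiunitalCoFrob (R : Type) [CommRing R] {M : Type} [AddCommGroup M] [Module R M]
    (𝒜 : ℤ → Submodule R M) [DirectSum.Decomposition 𝒜] where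
  mu : M ⊗[R] M →ₗ[R] M
  lam : M →ₗ[R] M ⊗[R] M
  unit : M
  counit : M →ₗ[R] R
  dm : ℤ
  dl : ℤ
  mu_homog : IsHomogProd 𝒜 dm mu
  lam_homog : IsHomogCoprod 𝒜 dl lam
  unit_homog : unit ∈ 𝒜 (-dm)
  counit_homog : IsHomogFun 𝒜 (-dl) counit
  mu_assoc : mu.comp (LinearMap.rTensor M mu) =
    ksign dm • (mu.comp ((TensorProduct.map (signAction 𝒜 dm) mu).comp
      (TensorProduct.assoc R M M M).toLinearMap))
  /-- graded coassociativity `(λ⊗1)λ = (-1)^{|λ|}(1⊗λ)λ` -/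
  lam_coassoc : (LinearMap.rTensor M lam).comp lam =
    ksign dl • ((TensorProduct.assoc R M M M).symm.toLinearMap.comp
      ((TensorProduct.map (signAction 𝒜 dl) lam).comp lam))
  unit_left : ksign dm • (mu.comp ((TensorProduct.mk R M M) unit)) = LinearMap.id
  unit_right : mu.comp (((TensorProduct.mk R M M).flip unit).comp (signAction 𝒜 (-dm))) =
    LinearMap.id
  /-- `(ε⊗1)λ = 1` -/
  counit_left : (contrL counit).comp lam = LinearMap.id
  /-- `(-1)^{|λ|}(1⊗ε)λ = 1` -/
  counit_right : ksign dl • ((contrR 𝒜 counit (-dl)).comp lam) = LinearMap.id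
  cop : M ⊗[R] M
  cop_def : cop = ksign (dl * dm + dm) • lam unit
  pr : M ⊗[R] M →ₗ[R] R
  /-- the pairing `p = (-1)^{|λ|} εμ` -/
  pr_def : pr = ksign dl • (counit.comp mu)
  cofrob_left : lam = (TensorProduct.map (signAction 𝒜 dm) mu).comp
    ((TensorProduct.assoc R M M M).toLinearMap.comp (TensorProduct.mk R (M ⊗[R] M) M cop))
  cofrob_right : lam = ksign dm • ((LinearMap.rTensor M mu).comp
    ((TensorProduct.assoc R M M M).symm.toLinearMap.comp
      (((TensorProduct.mk R M (M ⊗[R] M)).flip cop).comp (signAction 𝒜 (dl - dm)))))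
  /-- `μ = (-1)^{|μ||λ|+|λ|}(p⊗1)(1⊗λ)` -/
  cofrob_pr_left : mu = ksign (dm * dl + dl) • ((contrL pr).comp
    ((TensorProduct.assoc R M M M).symm.toLinearMap.comp
      (TensorProduct.map (signAction 𝒜 dl) lam)))
  /-- `μ = (-1)^{|μ||λ|}(1⊗p)(λ⊗1)` -/
  cofrob_pr_right : mu = ksign (dm * dl) • ((contrR 𝒜 pr (dm - dl)).comp
    ((TensorProduct.assoc R M M M).toLinearMap.comp (LinearMap.rTensor M lam)))
  cop_symm : twist 𝒜 cop = ksign dl • cop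
  /-- `pτ = (-1)^{|μ|} p` -/
  pr_symm : pr.comp (twist 𝒜) = ksign dm • pr

end GradedCoFrob

/-!
Write `c = ∑ c₁ ⊗ c₂`. Feeding `c₁` to `λ = (1 ⊗ μ)(c ⊗ 1)` gives `β = (λ ⊗ 1) c`, and
feeding `c₂` to `λ = ±(μ ⊗ 1)(1 ⊗ c)` gives `β = ±(1 ⊗ λ) c`. Because `λ` is homogeneous,
the cyclic permutation intertwines the two, `σ (λ ⊗ 1) = (1 ⊗ λ) τ` up to Koszul signs, and
`τ c = (-1)^{|λ|} c`. All signs are then read off from the degree `|λ| - |μ|` of `c`.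
-/

namespace GradedCoFrob

lemma ksign_add (m n : ℤ) : ksign (m + n) = ksign m * ksign n := by
  simp only [ksign, ← Int.negOnePow_def, Int.negOnePow_add, Units.val_mul]

lemma ksign_mul_self (n : ℤ) : ksign n * ksign n = 1 := by
  rw [ksign, ← Units.val_mul, Int.units_mul_self, Units.val_one]

lemma ksign_eq_of_even_sub {m n : ℤ} (h : Even (m - n)) : ksign m = ksign n :=
  congrArg Units.val ((Int.negOnePow_eq_iff m n).2 h)

variable {R : Type} [CommRing R] {M : Type} [AddCommGroup M] [Module R M]
  (𝒜 : ℤ → Submodule R M)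

@[elab_as_elim]
lemma tgrade_induction {k : ℤ} {motive : M ⊗[R] M → Prop} {w : M ⊗[R] M}
    (hw : w ∈ tgrade 𝒜 k) (zero : motive 0)
    (add : ∀ a b, motive a → motive b → motive (a + b))
    (tmul : ∀ (i j : ℤ) (x y : M), x ∈ 𝒜 i → y ∈ 𝒜 j → i + j = k → motive (x ⊗ₜ[R] y)) :
    motive w := by
  refine Submodule.iSup_induction (motive := motive) _ hw ?_ zero add
  rintro i _ ⟨t, rfl⟩
  induction t with
  | zero => simpa using zero
  | tmul x y => exact tmul i (k - i) x y x.2 y.2 (by ring)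
  | add a b ha hb => rw [map_add]; exact add _ _ ha hb

variable [DirectSum.Decomposition 𝒜]

section Homogeneous

lemma fromPieces_apply {N : Type} [AddCommGroup N] [Module R N]
    (f : ∀ i : ℤ, 𝒜 i →ₗ[R] N) {i : ℤ} {x : M} (hx : x ∈ 𝒜 i) :
    fromPieces 𝒜 f x = f i ⟨x, hx⟩ := by
  simp only [fromPieces, fromPiecesHom, LinearMap.comp_apply, LinearEquiv.coe_toLinearMap,
    LinearMap.lcomp_apply, DirectSum.decomposeLinearEquiv_apply,
    DirectSum.decompose_of_mem 𝒜 hx]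
  exact DFinsupp.lsum_single _ _ _ _

lemma fromPieces₂_apply {N : Type} [AddCommGroup N] [Module R N]
    (f : ∀ i j : ℤ, 𝒜 i →ₗ[R] 𝒜 j →ₗ[R] N) {i j : ℤ} {x y : M}
    (hx : x ∈ 𝒜 i) (hy : y ∈ 𝒜 j) :
    fromPieces₂ 𝒜 f x y = f i j ⟨x, hx⟩ ⟨y, hy⟩ := by
  rw [fromPieces₂, fromPieces_apply 𝒜 _ hx]
  exact fromPieces_apply 𝒜 _ hy

lemma linearMap_ext_homogeneous {N : Type} [AddCommGroup N] [Module R N] {f g : M →ₗ[R] N}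
    (h : ∀ (i : ℤ) (x : M), x ∈ 𝒜 i → f x = g x) : f = g := by
  ext x
  induction x using DirectSum.Decomposition.inductionOn 𝒜 with
  | zero => simp
  | homogeneous x => exact h _ x.1 x.2
  | add x y hx hy => rw [map_add, map_add, hx, hy]

lemma tensor_ext_homogeneous {N : Type} [AddCommGroup N] [Module R N]
    {f g : M ⊗[R] M →ₗ[R] N}
    (h : ∀ (i j : ℤ) (x y : M), x ∈ 𝒜 i → y ∈ 𝒜 j → f (x ⊗ₜ y) = g (x ⊗ₜ y)) : f = g :=
  TensorProduct.ext <| linearMap_ext_homogeneous 𝒜 fun i x hx =>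
    linearMap_ext_homogeneous 𝒜 fun j y hy => h i j x y hx hy

lemma signAction_apply (d : ℤ) {i : ℤ} {x : M} (hx : x ∈ 𝒜 i) :
    signAction 𝒜 d x = ksign (d * i) • x := by
  rw [signAction, fromPieces_apply 𝒜 _ hx]
  rfl

lemma signAction_signAction (d : ℤ) (x : M) :
    signAction 𝒜 d (signAction 𝒜 d x) = x := by
  induction x using DirectSum.Decomposition.inductionOn 𝒜 with
  | zero => simp
  | homogeneous x =>
      rw [signAction_apply 𝒜 d x.2, map_zsmul, signAction_apply 𝒜 d x.2,
        smul_smul, ksign_mul_self, one_smul]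
  | add x y hx hy => rw [map_add, map_add, hx, hy]

lemma twist_tmul {i j : ℤ} {x y : M} (hx : x ∈ 𝒜 i) (hy : y ∈ 𝒜 j) :
    twist 𝒜 (x ⊗ₜ[R] y) = ksign (i * j) • (y ⊗ₜ[R] x) := by
  rw [twist, TensorProduct.lift.tmul, fromPieces₂_apply 𝒜 _ hx hy]
  rfl

end Homogeneous

section Signs

lemma ksign_smul_map_signAction {a b : ℤ} {w : M ⊗[R] M} (hw : w ∈ tgrade 𝒜 (b - a)) :
    ksign a • TensorProduct.map (signAction 𝒜 a) (signAction 𝒜 (b - a)) w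
      = ksign b • LinearMap.rTensor M (signAction 𝒜 b) w := by
  refine tgrade_induction 𝒜 hw
    (by simp only [map_zero, zsmul_zero])
    (fun u v hu hv => by rw [map_add, map_add, zsmul_add, zsmul_add, hu, hv])
    (fun i j x y hx hy hij => ?_)
  simp only [TensorProduct.map_tmul, LinearMap.rTensor_tmul, signAction_apply 𝒜 _ hx,
    signAction_apply 𝒜 _ hy, TensorProduct.smul_tmul', TensorProduct.tmul_smul, smul_smul,
    ← ksign_add]
  -- the exponents differ by `(a - b) * (i - j + 1)`, and `i - j + 1 ≡ b - a + 1`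
  obtain ⟨r, hr⟩ := Int.even_mul_succ_self (b - a)
  rw [ksign_eq_of_even_sub (n := b + b * i)
    ⟨(b - a) * j - r, by linear_combination (a - b) * hij - hr⟩]

lemma cyc_tmul_of_mem_tgrade {j k : ℤ} {w : M ⊗[R] M} (hw : w ∈ tgrade 𝒜 k)
    {y : M} (hy : y ∈ 𝒜 j) :
    cyc 𝒜 (w ⊗ₜ y) = ksign (k * j) • (TensorProduct.assoc R M M M).symm (y ⊗ₜ w) := by
  refine tgrade_induction 𝒜 hw
    (by simp only [TensorProduct.zero_tmul, TensorProduct.tmul_zero, map_zero, zsmul_zero])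
    (fun u v hu hv => by rw [TensorProduct.add_tmul, map_add, hu, hv,
      TensorProduct.tmul_add, map_add, zsmul_add])
    (fun p q u v hu hv hpq => ?_)
  simp only [cyc, LinearMap.comp_apply, LinearEquiv.coe_toLinearMap, TensorProduct.assoc_tmul,
    LinearMap.lTensor_tmul]
  rw [twist_tmul 𝒜 hv hy, TensorProduct.tmul_smul, map_zsmul, map_zsmul,
    TensorProduct.assoc_symm_tmul, LinearMap.rTensor_tmul, twist_tmul 𝒜 hu hy,
    TensorProduct.smul_tmul', smul_smul, ← ksign_add, TensorProduct.assoc_symm_tmul,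
    ← TensorProduct.smul_tmul', ← hpq, add_mul, add_comm (p * j)]
  -- the two `ℤ`-actions on `(M ⊗ M) ⊗ M` agree only up to unfolding
  rfl

lemma cyc_rTensor_of_isHomogCoprod {d : ℤ} {lam : M →ₗ[R] M ⊗[R] M}
    (hlam : IsHomogCoprod 𝒜 d lam) (w : M ⊗[R] M) :
    cyc 𝒜 (LinearMap.rTensor M lam w) = (TensorProduct.assoc R M M M).symm
      (LinearMap.lTensor M lam (LinearMap.rTensor M (signAction 𝒜 d) (twist 𝒜 w))) := by
  suffices (cyc 𝒜).comp (LinearMap.rTensor M lam)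
      = (TensorProduct.assoc R M M M).symm.toLinearMap ∘ₗ LinearMap.lTensor M lam
        ∘ₗ LinearMap.rTensor M (signAction 𝒜 d) ∘ₗ twist 𝒜 from
    LinearMap.congr_fun this w
  refine tensor_ext_homogeneous 𝒜 fun i j x y hx hy => ?_
  simp only [LinearMap.comp_apply, LinearMap.rTensor_tmul, LinearEquiv.coe_toLinearMap]
  rw [cyc_tmul_of_mem_tgrade 𝒜 (hlam i x hx) hy, twist_tmul 𝒜 hx hy, map_zsmul, map_zsmul,
    map_zsmul, LinearMap.rTensor_tmul, signAction_apply 𝒜 d hy, ← TensorProduct.smul_tmul',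
    map_zsmul, LinearMap.lTensor_tmul, map_zsmul, smul_smul, ← ksign_add, add_mul, mul_comm i,
    mul_comm d]

end Signs

/-- The map `1 ⊗ μ ⊗ 1` of the paper, so that `β = midMul 𝒜 |μ| μ (c ⊗ c)`. -/
noncomputable def midMul (d : ℤ) (mu : M ⊗[R] M →ₗ[R] M) :
    (M ⊗[R] M) ⊗[R] (M ⊗[R] M) →ₗ[R] (M ⊗[R] M) ⊗[R] M :=
  (LinearMap.rTensor M (TensorProduct.map (signAction 𝒜 d) mu)).comp
    ((LinearMap.rTensor M (TensorProduct.assoc R M M M).toLinearMap).comp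
      (TensorProduct.assoc R (M ⊗[R] M) M M).symm.toLinearMap)

lemma midMul_tmul_tmul (d : ℤ) (mu : M ⊗[R] M →ₗ[R] M) (w : M ⊗[R] M) (x y : M) :
    midMul 𝒜 d mu (w ⊗ₜ (x ⊗ₜ y))
      = TensorProduct.map (signAction 𝒜 d) mu
          (TensorProduct.assoc R M M M (w ⊗ₜ x)) ⊗ₜ y := by
  simp [midMul]

lemma midMul_tmul_tmul_left (d : ℤ) (mu : M ⊗[R] M →ₗ[R] M) (a b : M) (z : M ⊗[R] M) :
    midMul 𝒜 d mu ((a ⊗ₜ b) ⊗ₜ z) = (TensorProduct.assoc R M M M).symm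
      (signAction 𝒜 d a ⊗ₜ
        LinearMap.rTensor M mu ((TensorProduct.assoc R M M M).symm (b ⊗ₜ z))) := by
  induction z using TensorProduct.induction_on with
  | zero => simp
  | tmul x y => simp [midMul_tmul_tmul]
  | add u v hu hv => simp only [TensorProduct.tmul_add, map_add, hu, hv]

namespace UnitalCoFrob

variable {𝒜} (U : UnitalCoFrob R 𝒜)

lemma cop_mem_tgrade : U.cop ∈ tgrade 𝒜 (U.dl - U.dm) := by
  rw [U.cop_def, sub_eq_neg_add]
  exact Submodule.smul_of_tower_mem _ _ (U.lam_homog _ _ U.unit_homog)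

lemma midMul_cop_tmul (w : M ⊗[R] M) :
    midMul 𝒜 U.dm U.mu (U.cop ⊗ₜ w) = LinearMap.rTensor M U.lam w := by
  induction w using TensorProduct.induction_on with
  | zero => simp
  | tmul x y => simp [midMul_tmul_tmul, U.cofrob_left]
  | add u v hu hv => simp only [TensorProduct.tmul_add, map_add, hu, hv]

lemma rTensor_mu_assoc_symm_tmul_cop (b : M) :
    LinearMap.rTensor M U.mu ((TensorProduct.assoc R M M M).symm (b ⊗ₜ U.cop))
      = ksign U.dm • U.lam (signAction 𝒜 (U.dl - U.dm) b) := by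
  simp [U.cofrob_right, signAction_signAction, smul_smul, ksign_mul_self]

lemma midMul_tmul_cop (w : M ⊗[R] M) :
    midMul 𝒜 U.dm U.mu (w ⊗ₜ U.cop) = ksign U.dm • (TensorProduct.assoc R M M M).symm
      (LinearMap.lTensor M U.lam
        (TensorProduct.map (signAction 𝒜 U.dm) (signAction 𝒜 (U.dl - U.dm)) w)) := by
  induction w using TensorProduct.induction_on with
  | zero => simp only [TensorProduct.zero_tmul, map_zero, zsmul_zero]
  | tmul a b => simp [midMul_tmul_tmul_left, rTensor_mu_assoc_symm_tmul_cop]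
  | add u v hu hv => simp only [TensorProduct.add_tmul, map_add, hu, hv, zsmul_add]

end UnitalCoFrob

theorem beta_cyclically_symmetric_general {R : Type} [CommRing R] {M : Type} [AddCommGroup M]
    [Module R M]
    (𝒜 : ℤ → Submodule R M) [DirectSum.Decomposition 𝒜]
    (U : UnitalCoFrob R 𝒜) :
    cyc 𝒜 (((LinearMap.rTensor M (TensorProduct.map (signAction 𝒜 U.dm) U.mu)).comp
        ((LinearMap.rTensor M (TensorProduct.assoc R M M M).toLinearMap).comp
          (TensorProduct.assoc R (M ⊗[R] M) M M).symm.toLinearMap))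
        (U.cop ⊗ₜ[R] U.cop))
    = ((LinearMap.rTensor M (TensorProduct.map (signAction 𝒜 U.dm) U.mu)).comp
        ((LinearMap.rTensor M (TensorProduct.assoc R M M M).toLinearMap).comp
          (TensorProduct.assoc R (M ⊗[R] M) M M).symm.toLinearMap))
        (U.cop ⊗ₜ[R] U.cop) := by
  calc cyc 𝒜 (midMul 𝒜 U.dm U.mu (U.cop ⊗ₜ U.cop))
      = cyc 𝒜 (LinearMap.rTensor M U.lam U.cop) := by rw [U.midMul_cop_tmul]
    _ = (TensorProduct.assoc R M M M).symm (LinearMap.lTensor M U.lam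
          (LinearMap.rTensor M (signAction 𝒜 U.dl) (twist 𝒜 U.cop))) :=
        cyc_rTensor_of_isHomogCoprod 𝒜 U.lam_homog U.cop
    _ = (TensorProduct.assoc R M M M).symm (LinearMap.lTensor M U.lam
          (ksign U.dl • LinearMap.rTensor M (signAction 𝒜 U.dl) U.cop)) := by
        rw [U.cop_symm, map_zsmul]
    _ = (TensorProduct.assoc R M M M).symm (LinearMap.lTensor M U.lam
          (ksign U.dm • TensorProduct.map (signAction 𝒜 U.dm)
            (signAction 𝒜 (U.dl - U.dm)) U.cop)) := by
        rw [ksign_smul_map_signAction 𝒜 U.cop_mem_tgrade]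
    _ = midMul 𝒜 U.dm U.mu (U.cop ⊗ₜ U.cop) := by
        rw [U.midMul_tmul_cop, map_zsmul, map_zsmul]

/-- In a unital coFrobenius bialgebra `(A,μ,λ,η)` with copairing `c`,
the operation `β = (1⊗μ⊗1)(c⊗c) : R → A⊗A⊗A` is cyclically symmetric: `σβ = β`. -/
theorem beta_cyclically_symmetric {R : Type} [CommRing R] {M : Type} [AddCommGroup M]
    [Module R M] [Module.Free R M] [Module.Finite R M]
    (𝒜 : ℤ → Submodule R M) [DirectSum.Decomposition 𝒜]
    (U : UnitalCoFrob R 𝒜) :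
    cyc 𝒜 (((LinearMap.rTensor M (TensorProduct.map (signAction 𝒜 U.dm) U.mu)).comp
        ((LinearMap.rTensor M (TensorProduct.assoc R M M M).toLinearMap).comp
          (TensorProduct.assoc R (M ⊗[R] M) M M).symm.toLinearMap))
        (U.cop ⊗ₜ[R] U.cop))
    = ((LinearMap.rTensor M (TensorProduct.map (signAction 𝒜 U.dm) U.mu)).comp
        ((LinearMap.rTensor M (TensorProduct.assoc R M M M).toLinearMap).comp
          (TensorProduct.assoc R (M ⊗[R] M) M M).symm.toLinearMap))
        (U.cop ⊗ₜ[R] U.cop) :=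
  beta_cyclically_symmetric_general 𝒜 U

end GradedCoFrob
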